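/- arXiv:1408.3353 — 3 statements merged into one kernel-verified Lean document; each statement's English description precedes it below -/
import Mathlib

section
/- Let A be a complete discrete valuation ring whose residue field k is perfect of characteristic p and whose fraction field has characteristic 0, and suppose the characteristic polynomial of an automorphism γ of a finite free A-module M splits over A with all roots being roots of unity of order prime to p. Then M admits a γ-stable filtration 0 = F^0 ⊆ F^1 ⊆ ... ⊆ F^s = M with each F^e/F^{e-1} free of rank one over A. -/
/-!
Since the characteristic polynomial splits, Cayley–Hamilton makes `∏ (γ - a)` vanish, so `γ` has
an eigenvector `v`. Over a PID, the Smith normal form of `A ∙ v` writes `v = c • w` with `w` a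
basis vector, i.e. `φ w = 1` for some linear form `φ`. Then `w` is again an eigenvector, its
eigenvalue is a unit (apply `φ` to `w = a • γ⁻¹ w`), so the line `A ∙ w` is `γ`-stable; and
`M ⧸ A ∙ w` is torsion-free, hence free of rank one less. Induct on the rank, pulling back the
flag of the quotient and prepending `0`.
-/

open Polynomial Module

section

variable {R M Q : Type*} [CommRing R] [AddCommGroup M] [Module R M] [AddCommGroup Q]
  [Module R Q]

theorem Module.End.exists_hasEigenvalue_of_aeval_prod_eq_zero [Nontrivial M] {f : End R M}
    {r : Multiset R} (h : aeval f (r.map (X - C ·)).prod = 0) : ∃ a ∈ r, f.HasEigenvalue a := by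
  induction r using Multiset.induction_on with
  | empty => simp at h
  | cons a s ih =>
    rw [Multiset.map_cons, Multiset.prod_cons, map_mul] at h
    by_cases hs : aeval f (s.map (X - C ·)).prod = 0
    · obtain ⟨b, hb, hfb⟩ := ih hs
      exact ⟨b, Multiset.mem_cons_of_mem hb, hfb⟩
    · obtain ⟨x, hx⟩ := not_forall.mp (mt LinearMap.ext hs)
      refine ⟨a, Multiset.mem_cons_self _ _, hasEigenvalue_of_hasEigenvector ⟨?_, hx⟩⟩
      simpa [mem_eigenspace_iff, sub_eq_zero] using LinearMap.congr_fun h x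

theorem LinearMap.comp_aeval_eq_aeval_comp {f : End R M} {f' : End R Q} {g : M →ₗ[R] Q}
    (h : g ∘ₗ f = f' ∘ₗ g) (P : R[X]) : g ∘ₗ aeval f P = aeval f' P ∘ₗ g := by
  induction P using Polynomial.induction_on with
  | C a => ext; simp
  | add p q hp hq => simp only [map_add, LinearMap.comp_add, LinearMap.add_comp, hp, hq]
  | monomial n a ih =>
    calc g ∘ₗ aeval f (C a * X ^ (n + 1)) = (g ∘ₗ aeval f (C a * X ^ n)) ∘ₗ f := by
          rw [pow_succ, ← mul_assoc, map_mul _ (C a * X ^ n) X, aeval_X, Module.End.mul_eq_comp,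
            LinearMap.comp_assoc]
      _ = aeval f' (C a * X ^ n) ∘ₗ (g ∘ₗ f) := by rw [ih, LinearMap.comp_assoc]
      _ = aeval f' (C a * X ^ (n + 1)) ∘ₗ g := by
          rw [h, pow_succ, ← mul_assoc, map_mul _ (C a * X ^ n) X, aeval_X,
            Module.End.mul_eq_comp, LinearMap.comp_assoc]

theorem Polynomial.aeval_eq_zero_of_comp_eq {f : End R M} {f' : End R Q} {g : M →ₗ[R] Q}
    (hg : Function.Surjective g) (h : g ∘ₗ f = f' ∘ₗ g) {P : R[X]} (hP : aeval f P = 0) :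
    aeval f' P = 0 :=
  (LinearMap.cancel_right hg).1 <| by
    rw [← LinearMap.comp_aeval_eq_aeval_comp h, hP, LinearMap.comp_zero, LinearMap.zero_comp]

abbrev successiveQuotient (F : ℕ → Submodule R M) (e : ℕ) : Type _ :=
  ↥(F (e + 1)) ⧸ (F e).comap (F (e + 1)).subtype

structure IsStableFlag (γ : M →ₗ[R] M) (n : ℕ) (F : ℕ → Submodule R M) : Prop where
  zero_eq_bot : F 0 = ⊥
  eq_top : F n = ⊤
  monotone : Monotone F
  map_eq : ∀ e, (F e).map γ = F e
  nonempty_equiv : ∀ e < n, Nonempty (successiveQuotient F e ≃ₗ[R] R)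

noncomputable def successiveQuotientComapEquiv (f : M →ₗ[R] Q) (hf : Function.Surjective f)
    (G : ℕ → Submodule R Q) (e : ℕ) :
    successiveQuotient (fun e => (G e).comap f) e ≃ₗ[R] successiveQuotient G e :=
  let ψ : ↥((G (e + 1)).comap f) →ₗ[R] successiveQuotient G e :=
    ((G e).comap (G (e + 1)).subtype).mkQ ∘ₗ f.restrict fun _ hx => hx
  have hψ : Function.Surjective ψ := by
    rintro ⟨y⟩
    obtain ⟨x, hx⟩ := hf y
    exact ⟨⟨x, show f x ∈ G (e + 1) from hx ▸ y.2⟩,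
      congrArg Submodule.Quotient.mk (Subtype.ext hx)⟩
  have hker : ((G e).comap f).comap ((G (e + 1)).comap f).subtype = LinearMap.ker ψ := by
    ext x
    simp [ψ, Submodule.Quotient.mk_eq_zero]
  (Submodule.quotEquivOfEq _ _ hker).trans (ψ.quotKerEquivOfSurjective hψ)

theorem Submodule.map_equiv_comap_eq_comap_map_equiv (γ : M ≃ₗ[R] M) (γ' : Q ≃ₗ[R] Q)
    {f : M →ₗ[R] Q} (h : f ∘ₗ γ = γ' ∘ₗ f) (P : Submodule R Q) :
    (P.comap f).map (γ : M →ₗ[R] M) = (P.map (γ' : Q →ₗ[R] Q)).comap f := by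
  have h' : f ∘ₗ γ.symm = γ'.symm ∘ₗ f := by
    ext x
    apply γ'.injective
    simpa using (LinearMap.congr_fun h (γ.symm x)).symm
  rw [map_equiv_eq_comap_symm, map_equiv_eq_comap_symm, ← comap_comp, ← comap_comp]
  exact congrArg (P.comap ·) h'

def Submodule.liftFlag (N : Submodule R M) (G : ℕ → Submodule R (M ⧸ N)) : ℕ → Submodule R M
  | 0 => ⊥
  | e + 1 => (G e).comap N.mkQ

theorem IsStableFlag.liftFlag {N : Submodule R M} {γ : M ≃ₗ[R] M}
    (hN : N.map (γ : M →ₗ[R] M) = N) (eN : N ≃ₗ[R] R) {n : ℕ} {G : ℕ → Submodule R (M ⧸ N)}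
    (hG : IsStableFlag (Submodule.Quotient.equiv N N γ hN : (M ⧸ N) →ₗ[R] M ⧸ N) n G) :
    IsStableFlag (γ : M →ₗ[R] M) (n + 1) (N.liftFlag G) where
  zero_eq_bot := rfl
  eq_top := by simp [Submodule.liftFlag, hG.eq_top]
  monotone := monotone_nat_of_le_succ fun
    | 0 => bot_le
    | e + 1 => Submodule.comap_mono (hG.monotone e.le_succ)
  map_eq
    | 0 => Submodule.map_bot _
    | e + 1 => by
      rw [Submodule.liftFlag, Submodule.map_equiv_comap_eq_comap_map_equiv γ
        (Submodule.Quotient.equiv N N γ hN) (LinearMap.ext fun _ => rfl), hG.map_eq]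
  nonempty_equiv
    | 0, _ => by
      have hN1 : N.liftFlag G 1 = N := by simp [Submodule.liftFlag, hG.zero_eq_bot]
      exact ⟨(Submodule.quotEquivOfEqBot _ (Submodule.ker_subtype _)).trans
        ((LinearEquiv.ofEq _ _ hN1).trans eN)⟩
    | e + 1, he => (hG.nonempty_equiv e (by omega)).map
        (successiveQuotientComapEquiv N.mkQ N.mkQ_surjective G e).trans

theorem Submodule.isTorsionFree_quotient_span_singleton [IsTorsionFree R M] {w : M}
    {φ : Dual R M} (hφ : φ w = 1) : IsTorsionFree R (M ⧸ R ∙ w) := by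
  refine ⟨fun r hr x y hxy => ?_⟩
  induction x using Submodule.Quotient.induction_on with | H x => ?_
  induction y using Submodule.Quotient.induction_on with | H y => ?_
  simp only [← Submodule.Quotient.mk_smul, Submodule.Quotient.eq, ← smul_sub] at hxy
  obtain ⟨t, ht⟩ := Submodule.mem_span_singleton.mp hxy
  have ht' : t = r * φ (x - y) := by simpa [hφ] using congrArg φ ht
  rw [Submodule.Quotient.eq, Submodule.mem_span_singleton]
  exact ⟨φ (x - y), hr.isSMulRegular (by simp only [← ht, ht', mul_smul])⟩

variable (R) in
theorem exists_eq_smul_and_apply_eq_one [IsDomain R] [IsPrincipalIdealRing R] [Free R M]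
    [Module.Finite R M] {v : M} (hv : v ≠ 0) :
    ∃ (c : R) (w : M) (φ : Dual R M), v = c • w ∧ φ w = 1 := by
  obtain ⟨n, snf⟩ := (R ∙ v).smithNormalForm (Free.chooseBasis R M)
  obtain rfl : 1 = n := by
    simpa [(LinearEquiv.toSpanNonzeroSingleton R M v hv).finrank_eq.symm] using
      finrank_eq_card_basis snf.bN
  have hv' := congrArg Subtype.val (snf.bN.sum_repr ⟨v, Submodule.mem_span_singleton_self v⟩)
  simp only [Fin.sum_univ_one, Submodule.coe_smul, snf.snf, smul_smul] at hv'
  exact ⟨_, _, snf.bM.coord (snf.f 0), hv'.symm, by simp⟩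

theorem exists_map_eq_and_isTorsionFree_quotient [IsDomain R] [IsPrincipalIdealRing R]
    [Free R M] [Module.Finite R M] (γ : M ≃ₗ[R] M) {a : R}
    (ha : End.HasEigenvalue (γ : End R M) a) :
    ∃ N : Submodule R M, N.map (γ : M →ₗ[R] M) = N ∧ Nonempty (N ≃ₗ[R] R) ∧
      IsTorsionFree R (M ⧸ N) := by
  obtain ⟨v, hv⟩ := ha.exists_hasEigenvector
  obtain ⟨c, w, φ, rfl, hφ⟩ := exists_eq_smul_and_apply_eq_one R hv.2
  have hc : c ≠ 0 := by rintro rfl; exact hv.2 (zero_smul _ _)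
  have hw : w ≠ 0 := by rintro rfl; simp at hφ
  have hγw : γ w = a • w := smul_right_injective M hc <| by
    simpa [smul_comm c a] using hv.apply_eq_smul
  have ha : IsUnit a := by
    refine IsUnit.of_mul_eq_one (b := φ (γ.symm w)) ?_
    rw [← smul_eq_mul, ← map_smul, ← map_smul, ← hγw, LinearEquiv.symm_apply_apply, hφ]
  refine ⟨R ∙ w, ?_, ⟨(LinearEquiv.toSpanNonzeroSingleton R M w hw).symm⟩,
    Submodule.isTorsionFree_quotient_span_singleton hφ⟩
  rw [Submodule.map_span, Set.image_singleton, LinearEquiv.coe_coe, hγw,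
    Submodule.span_singleton_smul_eq ha]

theorem exists_isStableFlag_of_aeval_eq_zero [IsDomain R] [IsPrincipalIdealRing R] [Free R M]
    [Module.Finite R M] (γ : M ≃ₗ[R] M) {r : Multiset R}
    (hr : aeval (γ : End R M) (r.map (X - C ·)).prod = 0) :
    ∃ F, IsStableFlag (γ : M →ₗ[R] M) (finrank R M) F := by
  obtain ⟨n, hn⟩ : ∃ n, finrank R M = n := ⟨_, rfl⟩
  induction n generalizing M with
  | zero =>
    have : Subsingleton M := (finrank_eq_zero_iff_of_free R M).mp hn
    exact ⟨fun _ => ⊥, rfl, Subsingleton.elim _ _, monotone_const, fun _ => Submodule.map_bot _,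
      fun e he => by omega⟩
  | succ n ih =>
    have : Nontrivial M := (finrank_pos_iff_of_free R M).mp (by omega)
    obtain ⟨a, -, ha⟩ := End.exists_hasEigenvalue_of_aeval_prod_eq_zero hr
    obtain ⟨N, hN, ⟨eN⟩, _⟩ := exists_map_eq_and_isTorsionFree_quotient γ ha
    have hQ : finrank R (M ⧸ N) = n := by
      have := N.finrank_quotient_add_finrank
      rw [eN.finrank_eq, finrank_self] at this
      omega
    let γQ := Submodule.Quotient.equiv N N γ hN
    have hγQ : N.mkQ ∘ₗ γ = γQ ∘ₗ N.mkQ := LinearMap.ext fun _ => rfl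
    obtain ⟨G, hG⟩ := ih γQ (aeval_eq_zero_of_comp_eq N.mkQ_surjective hγQ hr) hQ
    rw [hQ] at hG
    exact hn ▸ ⟨_, hG.liftFlag hN eN⟩

end

theorem stmt_10_general (p : ℕ)
    (A : Type*) [CommRing A] [IsDomain A] [IsDiscreteValuationRing A]
    (M : Type*) [AddCommGroup M] [Module A M] [Module.Finite A M] [Module.Free A M]
    (γ : M ≃ₗ[A] M)
    (hsplit : ∃ r : Multiset A,
      γ.toLinearMap.charpoly = (r.map (fun a => Polynomial.X - Polynomial.C a)).prod ∧
      ∀ a ∈ r, ∃ n : ℕ, 0 < n ∧ ¬ p ∣ n ∧ a ^ n = 1) :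
    ∃ F : ℕ → Submodule A M,
      F 0 = ⊥ ∧ F (Module.finrank A M) = ⊤ ∧ Monotone F ∧
      (∀ e, Submodule.map γ.toLinearMap (F e) = F e) ∧
      ∀ e, e < Module.finrank A M →
        Module.Free A (↥(F (e + 1)) ⧸ Submodule.comap (F (e + 1)).subtype (F e)) ∧
        Module.rank A (↥(F (e + 1)) ⧸ Submodule.comap (F (e + 1)).subtype (F e)) = 1 := by
  obtain ⟨r, hchar, -⟩ := hsplit
  obtain ⟨F, hF⟩ := exists_isStableFlag_of_aeval_eq_zero γ (r := r)
    (hchar ▸ LinearMap.aeval_self_charpoly _)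
  refine ⟨F, hF.zero_eq_bot, hF.eq_top, hF.monotone, hF.map_eq, fun e he => ?_⟩
  obtain ⟨eR⟩ := hF.nonempty_equiv e he
  exact ⟨.of_equiv eR.symm, by simpa using eR.lift_rank_eq⟩

/-- Over a complete DVR `A` (perfect residue field of characteristic `p`, fraction field of
characteristic `0`), if the characteristic polynomial of an automorphism `γ` of a finite free
`A`-module `M` splits over `A` with all roots being roots of unity of order prime to `p`,
then `M` admits a `γ`-stable filtration `0 = F⁰ ⊆ F¹ ⊆ ... ⊆ Fˢ = M` with all successive
quotients free of rank one. -/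
theorem stmt_10 (p : ℕ) [Fact p.Prime]
    (A : Type*) [CommRing A] [IsDomain A] [IsDiscreteValuationRing A]
    [IsAdicComplete (IsLocalRing.maximalIdeal A) A]
    [CharP (IsLocalRing.ResidueField A) p]
    [PerfectRing (IsLocalRing.ResidueField A) p]
    (K : Type*) [Field K] [Algebra A K] [IsFractionRing A K] [CharZero K]
    (M : Type*) [AddCommGroup M] [Module A M] [Module.Finite A M] [Module.Free A M]
    (γ : M ≃ₗ[A] M)
    (hsplit : ∃ r : Multiset A,
      γ.toLinearMap.charpoly = (r.map (fun a => Polynomial.X - Polynomial.C a)).prod ∧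
      ∀ a ∈ r, ∃ n : ℕ, 0 < n ∧ ¬ p ∣ n ∧ a ^ n = 1) :
    ∃ F : ℕ → Submodule A M,
      F 0 = ⊥ ∧ F (Module.finrank A M) = ⊤ ∧ Monotone F ∧
      (∀ e, Submodule.map γ.toLinearMap (F e) = F e) ∧
      ∀ e, e < Module.finrank A M →
        Module.Free A (↥(F (e + 1)) ⧸ Submodule.comap (F (e + 1)).subtype (F e)) ∧
        Module.rank A (↥(F (e + 1)) ⧸ Submodule.comap (F (e + 1)).subtype (F e)) = 1 :=
  stmt_10_general p A M γ hsplit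
end

section
/- Let A be a discrete valuation ring with residue field k, and let L• be a bounded complex of finite free A-modules concentrated in degrees [0, m] with m ≥ 1. Then there exists an acyclic subcomplex N• of L•, concentrated in degrees m-1 and m, with N^{m-1} and N^m free direct summands of L^{m-1} and L^m respectively and d^m : N^{m-1} → N^m an isomorphism, such that the quotient complex L'• = L•/N• is again a bounded complex of finite free A-modules, the quotient map L• → L'• is a quasiisomorphism, and L'^m ⊗_A k = H^m(L'• ⊗_A k). -/
/-!
Write `d = d^{m-1}`. By the Smith normal form of `d` over the DVR, the unit elementary divisors
give a map `g : L^m → L^{m-1}` with `g d g = g` and `d ≡ d g d` modulo the maximal ideal.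
The endomorphism `e = d g + g d` of `L` is null-homotopic and idempotent; it is `g d` in degree
`m-1`, `d g` in degree `m` and zero elsewhere. Its image is the acyclic subcomplex
`N = (im (g d) ≅ im (d g))`, and `L → L / N` is a homotopy equivalence with inverse induced by
`1 - e`. Modulo `N`, the top differential is `d - d g d ≡ 0` modulo the maximal ideal.
-/

open CategoryTheory Submodule LinearMap HomologicalComplex

section OuterInverse

variable {A M N : Type*} [Semiring A] [AddCommMonoid M] [Module A M] [AddCommMonoid N]
  [Module A N] {d : M →ₗ[A] N} {g : N →ₗ[A] M}

theorem LinearMap.map_range_comp_eq_range_comp (h : g ∘ₗ d ∘ₗ g = g) :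
    (range (g ∘ₗ d)).map d = range (d ∘ₗ g) := by
  apply le_antisymm
  · rintro _ ⟨_, ⟨x, rfl⟩, rfl⟩
    exact ⟨d x, rfl⟩
  · rintro _ ⟨y, rfl⟩
    refine ⟨g y, ⟨g y, ?_⟩, rfl⟩
    exact LinearMap.congr_fun h y

theorem LinearMap.eq_zero_of_mem_range_comp (h : g ∘ₗ d ∘ₗ g = g) {x : M}
    (hx : x ∈ range (g ∘ₗ d)) (hdx : d x = 0) : x = 0 := by
  obtain ⟨x, rfl⟩ := hx
  change g (d x) = 0
  have : g (d (g (d x))) = g (d x) := LinearMap.congr_fun h (d x)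
  rw [← this]
  simpa using congrArg g hdx

end OuterInverse

theorem Module.free_quotient_range_of_isIdempotentElem {A M : Type*} [CommRing A] [IsDomain A]
    [IsPrincipalIdealRing A] [AddCommGroup M] [Module A M] [Module.Finite A M] [Module.Free A M]
    {p : M →ₗ[A] M} (hp : IsIdempotentElem p) : Module.Free A (M ⧸ range p) :=
  Module.Free.of_equiv' inferInstance (quotientEquivOfIsCompl _ _ hp.isCompl).symm

theorem Submodule.range_mapQ_le_smul_top {A M N : Type*} [Ring A] [AddCommGroup M] [Module A M]
    [AddCommGroup N] [Module A N] {S : Submodule A M} {T : Submodule A N} {d : M →ₗ[A] N}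
    (h : S ≤ T.comap d) {I : Ideal A} (hd : range d ≤ T ⊔ I • ⊤) :
    range (S.mapQ T d h) ≤ I • ⊤ := by
  rw [range_mapQ]
  calc map T.mkQ (range d) ≤ map T.mkQ (T ⊔ I • ⊤) := map_mono hd
    _ = I • map T.mkQ ⊤ := by rw [map_sup, map_smul'', mkQ_map_self, bot_sup_eq]
    _ ≤ I • ⊤ := smul_mono_right _ le_top

open IsLocalRing in
theorem LinearMap.exists_outerInverse_range_le_sup_maximalIdeal_smul {A M N : Type*} [CommRing A]
    [IsDomain A] [IsPrincipalIdealRing A] [IsLocalRing A] [AddCommGroup M] [Module A M]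
    [AddCommGroup N] [Module A N] [Module.Finite A N] [Module.Free A N] (d : M →ₗ[A] N) :
    ∃ g : N →ₗ[A] M,
      g ∘ₗ d ∘ₗ g = g ∧ range d ≤ range (d ∘ₗ g) ⊔ maximalIdeal A • ⊤ := by
  classical
  obtain ⟨n, bN, bR, f, a, snf⟩ := (range d).smithNormalForm (Module.finBasis A N)
  let U k := ∃ i, IsUnit (a i) ∧ f i = k
  have hmem : ∀ k, U k → bN k ∈ range d := by
    rintro _ ⟨i, hi, rfl⟩
    obtain ⟨x, hx⟩ := mem_range.mp (bR i).2
    refine ⟨((hi.unit⁻¹ : Aˣ) : A) • x, ?_⟩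
    rw [map_smul, hx, snf, smul_smul, IsUnit.val_inv_mul, one_smul]
  choose! y hy using fun k hk => mem_range.mp (hmem k hk)
  let g : N →ₗ[A] M := bN.constr A fun k => if U k then y k else 0
  have hg (k) : g (bN k) = if U k then y k else 0 := bN.constr_basis A _ k
  have hdg (k) : d (g (bN k)) = if U k then bN k else 0 := by
    rw [hg]
    split_ifs with hk
    exacts [hy k hk, map_zero d]
  refine ⟨g, bN.ext fun k => ?_, ?_⟩
  · change g (d (g (bN k))) = g (bN k)
    rw [hdg]
    split_ifs with hk
    · rfl
    · rw [map_zero, hg, if_neg hk]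
  · rintro _ ⟨x, rfl⟩
    have hx : d x = ∑ i, bR.repr ⟨d x, mem_range_self d x⟩ i • a i • bN (f i) := by
      simp_rw [← snf, ← Submodule.coe_smul, ← Submodule.coe_sum, bR.sum_repr]
    have hres : d x - d (g (d x)) ∈ maximalIdeal A • (⊤ : Submodule A N) := by
      rw [hx]
      simp only [map_sum, map_smul, ← Finset.sum_sub_distrib, ← smul_sub]
      refine Submodule.sum_mem _ fun i _ => Submodule.smul_mem _ _ ?_
      by_cases hi : IsUnit (a i)
      · simp [hdg, show U (f i) from ⟨i, hi, rfl⟩]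
      · exact Submodule.smul_mem_smul ((mem_maximalIdeal _).mpr hi) Submodule.mem_top
    exact mem_sup.mpr ⟨d (g (d x)), ⟨d x, rfl⟩, _, hres, add_sub_cancel _ _⟩

namespace HomologicalComplex

variable {R : Type*} [Ring R] {ι : Type*} {c : ComplexShape ι}
  (K : HomologicalComplex (ModuleCat R) c) (S : ∀ i, Submodule R (K.X i))
  (hS : ∀ i j, S i ≤ (S j).comap (K.d i j).hom)

noncomputable def quotient : HomologicalComplex (ModuleCat R) c where
  X i := ModuleCat.of R (K.X i ⧸ S i)
  d i j := ModuleCat.ofHom ((S i).mapQ (S j) (K.d i j).hom (hS i j))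
  shape i j hij := by
    ext x
    simp only [ModuleCat.hom_ofHom, LinearMap.comp_apply, mkQ_apply, mapQ_apply]
    rw [K.shape i j hij]
    simp
  d_comp_d' i j k _ _ := by
    ext x
    simp [← LinearMap.comp_apply, ← ModuleCat.hom_comp]

noncomputable def mkQ : K ⟶ K.quotient S hS where
  f i := ModuleCat.ofHom (S i).mkQ
  comm' _ _ _ := rfl

variable {K S hS}

lemma mkQ_f_surjective (i : ι) : Function.Surjective ((K.mkQ S hS).f i).hom :=
  (S i).mkQ_surjective

lemma ker_mkQ_f (i : ι) : LinearMap.ker ((K.mkQ S hS).f i).hom = S i := (S i).ker_mkQ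

lemma quotient_hom_ext {L : HomologicalComplex (ModuleCat R) c} {f g : K.quotient S hS ⟶ L}
    (h : K.mkQ S hS ≫ f = K.mkQ S hS ≫ g) : f = g := by
  ext i : 2
  exact Submodule.linearMap_qext _ (congrArg (fun φ => (φ.f i).hom) h)

noncomputable def liftQ {L : HomologicalComplex (ModuleCat R) c} (f : K ⟶ L)
    (hf : ∀ i, S i ≤ LinearMap.ker (f.f i).hom) : K.quotient S hS ⟶ L where
  f i := ModuleCat.ofHom ((S i).liftQ (f.f i).hom (hf i))
  comm' i j _ :=
    ModuleCat.hom_ext (Submodule.linearMap_qext _ (congrArg ModuleCat.Hom.hom (f.comm i j)))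

lemma mkQ_liftQ {L : HomologicalComplex (ModuleCat R) c} (f : K ⟶ L)
    (hf : ∀ i, S i ≤ LinearMap.ker (f.f i).hom) : K.mkQ S hS ≫ liftQ f hf = f := rfl

lemma comp_mkQ_eq_zero {L : HomologicalComplex (ModuleCat R) c} (f : L ⟶ K)
    (hf : ∀ i, LinearMap.range (f.f i).hom ≤ S i) : f ≫ K.mkQ S hS = 0 := by
  ext i x
  exact (Submodule.Quotient.mk_eq_zero _).mpr (hf i (LinearMap.mem_range_self _ x))

lemma range_f_le_comap_range_f (e : K ⟶ K) (i j : ι) :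
    LinearMap.range (e.f i).hom ≤ (LinearMap.range (e.f j).hom).comap (K.d i j).hom := by
  rintro _ ⟨x, rfl⟩
  exact ⟨(K.d i j).hom x, (congrArg (fun φ => φ.hom x) (e.comm i j)).symm⟩

variable {e : K ⟶ K}

lemma isIdempotentElem_hom_f (he : e ≫ e = e) (i : ι) : IsIdempotentElem (e.f i).hom := by
  change (e.f i).hom ∘ₗ (e.f i).hom = (e.f i).hom
  exact congrArg (fun φ => (φ.f i).hom) he

lemma range_f_le_ker_id_sub_f (he : e ≫ e = e) (i : ι) :
    LinearMap.range (e.f i).hom ≤ LinearMap.ker ((𝟙 K - e).f i).hom := by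
  rintro _ ⟨x, rfl⟩
  simp only [LinearMap.mem_ker, sub_f_apply, id_f, ModuleCat.hom_sub, ModuleCat.hom_id,
    LinearMap.sub_apply, LinearMap.id_apply]
  rw [← Module.End.mul_apply, (isIdempotentElem_hom_f he i).eq, sub_self]

noncomputable def homotopyEquivQuotientRange (he : e ≫ e = e) (h : Homotopy e 0) :
    HomotopyEquiv K (K.quotient _ (range_f_le_comap_range_f e)) where
  hom := K.mkQ _ _
  inv := liftQ (𝟙 K - e) (range_f_le_ker_id_sub_f he)
  homotopyHomInvId :=
    (Homotopy.equivSubZero.symm ((Homotopy.ofEq (sub_sub_cancel _ _)).trans h)).symm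
  homotopyInvHomId := Homotopy.ofEq <| quotient_hom_ext <| by
    rw [← Category.assoc, mkQ_liftQ, Preadditive.sub_comp, comp_mkQ_eq_zero e fun _ => le_rfl,
      sub_zero, Category.id_comp, Category.comp_id]

lemma quasiIso_mkQ_range (he : e ≫ e = e) (h : Homotopy e 0) :
    QuasiIso (K.mkQ _ (range_f_le_comap_range_f e)) :=
  (homotopyEquivQuotientRange he h).quasiIso_hom

end HomologicalComplex

namespace CochainComplex

variable {V : Type*} [Category V] [Preadditive V] (L : CochainComplex V ℕ) (n : ℕ)
  (g : L.X (n + 1) ⟶ L.X n)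

noncomputable def homFamilyAt : ∀ i j, L.X i ⟶ L.X j := fun i j =>
  if h : i = n + 1 ∧ j = n then eqToHom (by rw [h.1]) ≫ g ≫ eqToHom (by rw [h.2]) else 0

variable {L n}

lemma homFamilyAt_succ_self : homFamilyAt L n g (n + 1) n = g := by
  simp [homFamilyAt]

lemma homFamilyAt_of_ne_left {i : ℕ} (hi : i ≠ n + 1) (j : ℕ) : homFamilyAt L n g i j = 0 :=
  dif_neg fun h => hi h.1

lemma homFamilyAt_of_ne_right (i : ℕ) {j : ℕ} (hj : j ≠ n) : homFamilyAt L n g i j = 0 :=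
  dif_neg fun h => hj h.2

variable (L n)

noncomputable def nullHomotopicMapAt : L ⟶ L := Homotopy.nullHomotopicMap (homFamilyAt L n g)

noncomputable def nullHomotopyAt : Homotopy (nullHomotopicMapAt L n g) 0 :=
  Homotopy.nullHomotopy _ fun _ _ hij => dif_neg fun h => hij (by simp [h.1, h.2])

variable {L n}

lemma nullHomotopicMapAt_f (i : ℕ) :
    (nullHomotopicMapAt L n g).f i = L.d i (i + 1) ≫ homFamilyAt L n g (i + 1) i +
      prevD i (homFamilyAt L n g) := by
  rw [← dNext_eq _ rfl]
  rfl

lemma prevD_homFamilyAt_of_ne {i : ℕ} (hi : i ≠ n + 1) : prevD i (homFamilyAt L n g) = 0 := by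
  change homFamilyAt L n g i _ ≫ _ = 0
  rw [homFamilyAt_of_ne_left g hi, Limits.zero_comp]

lemma nullHomotopicMapAt_f_self : (nullHomotopicMapAt L n g).f n = L.d n (n + 1) ≫ g := by
  rw [nullHomotopicMapAt_f, homFamilyAt_succ_self, prevD_homFamilyAt_of_ne g (by omega), add_zero]

lemma nullHomotopicMapAt_f_succ : (nullHomotopicMapAt L n g).f (n + 1) = g ≫ L.d n (n + 1) := by
  rw [nullHomotopicMapAt_f, homFamilyAt_of_ne_right g _ (by omega), Limits.comp_zero, zero_add,
    prevD_eq _ rfl, homFamilyAt_succ_self]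

lemma nullHomotopicMapAt_f_of_ne {i : ℕ} (h₀ : i ≠ n) (h₁ : i ≠ n + 1) :
    (nullHomotopicMapAt L n g).f i = 0 := by
  rw [nullHomotopicMapAt_f, homFamilyAt_of_ne_right g _ h₀, prevD_homFamilyAt_of_ne g h₁,
    Limits.comp_zero, add_zero]

lemma nullHomotopicMapAt_comp_self (hg : g ≫ L.d n (n + 1) ≫ g = g) :
    nullHomotopicMapAt L n g ≫ nullHomotopicMapAt L n g = nullHomotopicMapAt L n g := by
  ext i : 1
  rw [HomologicalComplex.comp_f]
  by_cases h₀ : i = n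
  · subst h₀
    rw [nullHomotopicMapAt_f_self, Category.assoc, hg]
  by_cases h₁ : i = n + 1
  · subst h₁
    rw [nullHomotopicMapAt_f_succ, Category.assoc, reassoc_of% hg]
  · rw [nullHomotopicMapAt_f_of_ne g h₀ h₁, Limits.zero_comp]

end CochainComplex

theorem stmt_16_general (A : Type) [CommRing A] [IsDomain A] [IsDiscreteValuationRing A]
    (L : CochainComplex (ModuleCat A) ℕ) (m : ℕ) (hm : 1 ≤ m)
    (hfree : ∀ i, Module.Finite A (L.X i) ∧ Module.Free A (L.X i)) :
    ∃ (L' : CochainComplex (ModuleCat A) ℕ) (π : L ⟶ L'),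
      (∀ i, Function.Surjective (π.f i)) ∧
      (∀ i, i ≠ m - 1 → i ≠ m → Function.Injective (π.f i)) ∧
      (∃ C, IsCompl (LinearMap.ker ((π.f (m - 1)).hom : L.X (m - 1) →ₗ[A] L'.X (m - 1))) C) ∧
      (∃ C, IsCompl (LinearMap.ker ((π.f m).hom : L.X m →ₗ[A] L'.X m)) C) ∧
      Module.Free A ↥(LinearMap.ker ((π.f (m - 1)).hom : L.X (m - 1) →ₗ[A] L'.X (m - 1))) ∧
      Module.Free A ↥(LinearMap.ker ((π.f m).hom : L.X m →ₗ[A] L'.X m)) ∧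
      Submodule.map ((L.d (m - 1) m).hom : L.X (m - 1) →ₗ[A] L.X m)
          (LinearMap.ker ((π.f (m - 1)).hom : L.X (m - 1) →ₗ[A] L'.X (m - 1)))
        = LinearMap.ker ((π.f m).hom : L.X m →ₗ[A] L'.X m) ∧
      (∀ x ∈ LinearMap.ker ((π.f (m - 1)).hom : L.X (m - 1) →ₗ[A] L'.X (m - 1)),
        L.d (m - 1) m x = 0 → x = 0) ∧
      (∀ i, Module.Finite A (L'.X i) ∧ Module.Free A (L'.X i)) ∧
      QuasiIso π ∧
      LinearMap.range ((L'.d (m - 1) m).hom : L'.X (m - 1) →ₗ[A] L'.X m)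
        ≤ (IsLocalRing.maximalIdeal A) • (⊤ : Submodule A (L'.X m)) := by
  obtain ⟨n, rfl⟩ : ∃ n, m = n + 1 := ⟨m - 1, by omega⟩
  rw [Nat.add_sub_cancel]
  have (i : ℕ) : Module.Finite A (L.X i) := (hfree i).1
  have (i : ℕ) : Module.Free A (L.X i) := (hfree i).2
  obtain ⟨g, hgdg, hrange⟩ :=
    (L.d n (n + 1)).hom.exists_outerInverse_range_le_sup_maximalIdeal_smul
  let e := CochainComplex.nullHomotopicMapAt L n (ModuleCat.ofHom g)
  have he : e ≫ e = e := CochainComplex.nullHomotopicMapAt_comp_self _ (ModuleCat.hom_ext hgdg)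
  have he₀ : (e.f n).hom = g ∘ₗ (L.d n (n + 1)).hom := by
    simp [e, CochainComplex.nullHomotopicMapAt_f_self]
  have he₁ : (e.f (n + 1)).hom = (L.d n (n + 1)).hom ∘ₗ g := by
    simp [e, CochainComplex.nullHomotopicMapAt_f_succ]
  have he_ne (i : ℕ) (h₀ : i ≠ n) (h₁ : i ≠ n + 1) : e.f i = 0 :=
    CochainComplex.nullHomotopicMapAt_f_of_ne _ h₀ h₁
  refine ⟨_, L.mkQ _ (range_f_le_comap_range_f e),
    mkQ_f_surjective, fun i h₀ h₁ => ?_, ?_, ?_, ?_, ?_, ?_, ?_, fun i => ?_,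
    quasiIso_mkQ_range he (CochainComplex.nullHomotopyAt _ _ _), ?_⟩
  · exact ker_eq_bot.mp (by rw [ker_mkQ_f, he_ne i h₀ h₁, ModuleCat.hom_zero, range_zero])
  · exact ⟨_, by rw [ker_mkQ_f]; exact (isIdempotentElem_hom_f he n).isCompl⟩
  · exact ⟨_, by rw [ker_mkQ_f]; exact (isIdempotentElem_hom_f he (n + 1)).isCompl⟩
  · infer_instance
  · infer_instance
  · rw [ker_mkQ_f, ker_mkQ_f, he₀, he₁]
    exact map_range_comp_eq_range_comp hgdg
  · rw [ker_mkQ_f, he₀]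
    exact fun x hx => eq_zero_of_mem_range_comp hgdg hx
  · exact ⟨Module.Finite.quotient A _,
      Module.free_quotient_range_of_isIdempotentElem (isIdempotentElem_hom_f he i)⟩
  · exact range_mapQ_le_smul_top (range_f_le_comap_range_f e n (n + 1))
      (by simpa only [he₁] using hrange)

/-- Minimalization at the top degree: for a bounded complex `L•` of finite free modules over
a DVR `A` concentrated in degrees `[0, m]`, one can divide out an acyclic subcomplex `N•`
concentrated in degrees `m-1, m` (with `N^{m-1}, N^m` free direct summands and
`d : N^{m-1} ≅ N^m`), so that the quotient map `π : L• → L'•` is a quasiisomorphism onto a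
bounded complex of finite free modules whose top differential vanishes modulo the maximal
ideal, i.e. `L'^m ⊗ k = H^m(L'• ⊗ k)`. -/
theorem stmt_16 (A : Type) [CommRing A] [IsDomain A] [IsDiscreteValuationRing A]
    (L : CochainComplex (ModuleCat A) ℕ) (m : ℕ) (hm : 1 ≤ m)
    (hb : ∀ i, m < i → Subsingleton (L.X i))
    (hfree : ∀ i, Module.Finite A (L.X i) ∧ Module.Free A (L.X i)) :
    ∃ (L' : CochainComplex (ModuleCat A) ℕ) (π : L ⟶ L'),
      (∀ i, Function.Surjective (π.f i)) ∧
      (∀ i, i ≠ m - 1 → i ≠ m → Function.Injective (π.f i)) ∧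
      (∃ C, IsCompl (LinearMap.ker ((π.f (m - 1)).hom : L.X (m - 1) →ₗ[A] L'.X (m - 1))) C) ∧
      (∃ C, IsCompl (LinearMap.ker ((π.f m).hom : L.X m →ₗ[A] L'.X m)) C) ∧
      Module.Free A ↥(LinearMap.ker ((π.f (m - 1)).hom : L.X (m - 1) →ₗ[A] L'.X (m - 1))) ∧
      Module.Free A ↥(LinearMap.ker ((π.f m).hom : L.X m →ₗ[A] L'.X m)) ∧
      Submodule.map ((L.d (m - 1) m).hom : L.X (m - 1) →ₗ[A] L.X m)
          (LinearMap.ker ((π.f (m - 1)).hom : L.X (m - 1) →ₗ[A] L'.X (m - 1)))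
        = LinearMap.ker ((π.f m).hom : L.X m →ₗ[A] L'.X m) ∧
      (∀ x ∈ LinearMap.ker ((π.f (m - 1)).hom : L.X (m - 1) →ₗ[A] L'.X (m - 1)),
        L.d (m - 1) m x = 0 → x = 0) ∧
      (∀ i, Module.Finite A (L'.X i) ∧ Module.Free A (L'.X i)) ∧
      QuasiIso π ∧
      LinearMap.range ((L'.d (m - 1) m).hom : L'.X (m - 1) →ₗ[A] L'.X m)
        ≤ (IsLocalRing.maximalIdeal A) • (⊤ : Submodule A (L'.X m)) :=
  stmt_16_general A L m hm hfree
end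

section
/- Let A be a discrete valuation ring with maximal ideal 𝔪 and residue field k, M a finite free A-module, γ an automorphism of M, and 0 = F^0 ⊆ ... ⊆ F^s = M a γ-stable filtration with each G^e = F^e/F^{e-1} free of rank 1. Suppose d : L → M is an A-linear map from a finite free A-module L with im(d) ⊆ 𝔪M, and suppose ξ_e ∈ A^× are units such that γ acts on the cyclic module F^e/((F^e ∩ im(d)) + F^{e-1}) by multiplication by (the image of) ξ_e. Then there is an A-linear map t : M → L such that the map γ' = γ + d ∘ t satisfies: γ' preserves the filtration F^• and acts on each G^e by multiplication by ξ_e. -/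
/-!
Lifts `ℓ e ∈ F (e + 1)` of generators of the rank-one quotients `F (e + 1) / F e` form a basis
of `M`. The hypothesis on `γ` gives `w e ∈ L` with `γ (ℓ e) - ξ e • ℓ e ≡ d (w e)` modulo `F e`,
so the map `t` sending `ℓ e` to `-w e` makes `γ + d ∘ t` act on each `ℓ e` by `ξ e` modulo `F e`;
induction up the filtration spreads this from the generators to all of `F (e + 1)`.
-/

namespace Submodule

variable {R M : Type*}

section Ring

variable [Ring R] [AddCommGroup M] [Module R M]

/-- `ℓ` lifts a basis vector of the free rank-one module `P / N`. -/
structure IsFreeGeneratorMod (N P : Submodule R M) (ℓ : M) : Prop where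
  mem : ℓ ∈ P
  exists_sub_smul_mem : ∀ x ∈ P, ∃ a : R, x - a • ℓ ∈ N
  eq_zero_of_smul_mem : ∀ a : R, a • ℓ ∈ N → a = 0

theorem exists_isFreeGeneratorMod [StrongRankCondition R] {N P : Submodule R M}
    [Module.Free R (P ⧸ N.comap P.subtype)] (h : Module.rank R (P ⧸ N.comap P.subtype) = 1) :
    ∃ ℓ, IsFreeGeneratorMod N P ℓ := by
  obtain ⟨φ⟩ := Module.nonempty_linearEquiv_iff_rank_eq_one.mpr h
  obtain ⟨ℓ, hℓ⟩ := Quotient.mk_surjective _ (φ 1)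
  have sub_smul_mem_iff (y : P) (a : R) :
      y - a • ℓ ∈ N.comap P.subtype ↔ φ.symm (Quotient.mk y) = a := by
    rw [← Quotient.mk_eq_zero, Quotient.mk_sub, Quotient.mk_smul, hℓ, sub_eq_zero,
      ← map_smul, smul_eq_mul, mul_one, LinearEquiv.symm_apply_eq]
  refine ⟨ℓ, ℓ.2, fun x hx => ⟨_, (sub_smul_mem_iff ⟨x, hx⟩ _).mpr rfl⟩, fun a ha => ?_⟩
  have : (0 : P) - a • ℓ ∈ N.comap P.subtype := by
    rw [zero_sub]
    exact neg_mem ha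
  simpa using ((sub_smul_mem_iff 0 a).mp this).symm

variable {F : ℕ → Submodule R M} {s : ℕ} {ℓ : Fin s → M}

theorem le_span_range_of_isFreeGeneratorMod (hF0 : F 0 = ⊥)
    (hℓ : ∀ e : Fin s, IsFreeGeneratorMod (F e) (F (e + 1)) (ℓ e)) :
    ∀ n ≤ s, F n ≤ span R (Set.range ℓ) := by
  intro n
  induction n with
  | zero => simp [hF0]
  | succ m ih =>
    intro hm x hx
    obtain ⟨a, ha⟩ := (hℓ ⟨m, hm⟩).exists_sub_smul_mem x hx
    simpa using add_mem (ih (by omega) ha) (smul_mem _ a (subset_span ⟨⟨m, hm⟩, rfl⟩))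

theorem linearIndependent_of_isFreeGeneratorMod (hmono : Monotone F)
    (hℓ : ∀ e : Fin s, IsFreeGeneratorMod (F e) (F (e + 1)) (ℓ e)) : LinearIndependent R ℓ := by
  rw [Fintype.linearIndependent_iff]
  suffices ∀ n ≤ s, ∀ c : Fin s → R, (∀ i : Fin s, n ≤ (i : ℕ) → c i = 0) →
      ∑ i, c i • ℓ i = 0 → ∀ i, c i = 0 from
    fun c hc => this s le_rfl c (fun i hi => absurd i.2 (not_lt.mpr hi)) hc
  intro n
  induction n with
  | zero => exact fun _ c hc _ i => hc i (Nat.zero_le _)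
  | succ m ih =>
    intro hm c hc hsum
    set j : Fin s := ⟨m, hm⟩
    have hrest : ∑ i ∈ Finset.univ.erase j, c i • ℓ i ∈ F m := by
      refine sum_mem fun i hi => ?_
      rcases lt_or_ge (i : ℕ) m with h | h
      · exact smul_mem _ _ (hmono h (hℓ i).mem)
      · have : (i : ℕ) ≠ m := fun h' => Finset.ne_of_mem_erase hi (Fin.ext h')
        rw [hc i (by omega), zero_smul]
        exact zero_mem _
    have hcj : c j = 0 := by
      refine (hℓ j).eq_zero_of_smul_mem _ ?_
      rw [eq_neg_of_add_eq_zero_left ((Finset.add_sum_erase _ _ (Finset.mem_univ j)).trans hsum)]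
      exact neg_mem hrest
    refine ih (by omega) c (fun i hi => ?_) hsum
    rcases hi.eq_or_lt with h | h
    · rw [show i = j from Fin.ext h.symm, hcj]
    · exact hc i h

theorem exists_linearMap_apply_eq_of_isFreeGeneratorMod (hF0 : F 0 = ⊥) (hFs : F s = ⊤)
    (hmono : Monotone F) (hℓ : ∀ e : Fin s, IsFreeGeneratorMod (F e) (F (e + 1)) (ℓ e))
    {L : Type*} [AddCommGroup L] [Module R L] (v : Fin s → L) :
    ∃ t : M →ₗ[R] L, ∀ e, t (ℓ e) = v e := by
  have hli := linearIndependent_of_isFreeGeneratorMod hmono hℓ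
  have hsp : ⊤ ≤ span R (Set.range ℓ) :=
    hFs ▸ le_span_range_of_isFreeGeneratorMod hF0 hℓ s le_rfl
  refine ⟨(Module.Basis.mk hli hsp).constr ℕ v, fun e => ?_⟩
  rw [← Module.Basis.mk_apply hli hsp, Module.Basis.constr_basis]

end Ring

section CommRing

variable [CommRing R] [AddCommGroup M] [Module R M]

theorem IsFreeGeneratorMod.sub_smul_mem {N P : Submodule R M} {ℓ : M}
    (hℓ : IsFreeGeneratorMod N P ℓ) {φ : M →ₗ[R] M} (hφN : ∀ x ∈ N, φ x ∈ N) {c : R}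
    (hφℓ : φ ℓ - c • ℓ ∈ N) : ∀ x ∈ P, φ x - c • x ∈ N := by
  intro x hx
  obtain ⟨a, ha⟩ := hℓ.exists_sub_smul_mem x hx
  have hsplit : φ x - c • x = (φ (x - a • ℓ) - c • (x - a • ℓ)) + a • (φ ℓ - c • ℓ) := by
    simp only [map_sub, map_smul, smul_sub, smul_smul, mul_comm]
    module
  rw [hsplit]
  exact add_mem (sub_mem (hφN _ ha) (smul_mem _ _ ha)) (smul_mem _ _ hφℓ)

theorem mapsTo_of_isFreeGeneratorMod {F : ℕ → Submodule R M} {s : ℕ} {ℓ : Fin s → M}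
    (hF0 : F 0 = ⊥) (hFs : F s = ⊤) (hmono : Monotone F)
    (hℓ : ∀ e : Fin s, IsFreeGeneratorMod (F e) (F (e + 1)) (ℓ e)) {φ : M →ₗ[R] M}
    {ξ : ℕ → R} (hφ : ∀ e : Fin s, φ (ℓ e) - ξ e • ℓ e ∈ F e) : ∀ n, ∀ x ∈ F n, φ x ∈ F n := by
  intro n
  induction n with
  | zero => simp [hF0]
  | succ m ih =>
    intro x hx
    by_cases hm : m < s
    · have := (hℓ ⟨m, hm⟩).sub_smul_mem ih (hφ ⟨m, hm⟩) x hx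
      simpa using add_mem (hmono m.le_succ this) (smul_mem _ (ξ m) hx)
    · exact hmono (by omega) (hFs ▸ mem_top : φ x ∈ F s)

end CommRing

end Submodule

theorem stmt_18_general (A : Type*) [CommRing A] [IsDomain A]
    (M L : Type*) [AddCommGroup M] [Module A M]
    [AddCommGroup L] [Module A L]
    (γ : M ≃ₗ[A] M) (s : ℕ) (F : ℕ → Submodule A M)
    (hF0 : F 0 = ⊥) (hFs : F s = ⊤) (hmono : Monotone F)
    (hrk : ∀ e, e < s →
      Module.Free A (↥(F (e + 1)) ⧸ Submodule.comap (F (e + 1)).subtype (F e)) ∧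
      Module.rank A (↥(F (e + 1)) ⧸ Submodule.comap (F (e + 1)).subtype (F e)) = 1)
    (d : L →ₗ[A] M)
    (ξ : ℕ → A)
    (hact : ∀ e, e < s → ∀ x ∈ F (e + 1),
      γ x - ξ e • x ∈ (F (e + 1) ⊓ LinearMap.range d) ⊔ F e) :
    ∃ t : M →ₗ[A] L,
      (∀ e, ∀ x ∈ F e, (γ.toLinearMap + d ∘ₗ t) x ∈ F e) ∧
      (∀ e, e < s → ∀ x ∈ F (e + 1), (γ.toLinearMap + d ∘ₗ t) x - ξ e • x ∈ F e) := by
  choose ℓ hℓ using fun e : Fin s =>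
    have := (hrk e e.2).1
    Submodule.exists_isFreeGeneratorMod (hrk e e.2).2
  have hcorr (e : Fin s) : ∃ w : L, γ (ℓ e) - ξ e • ℓ e - d w ∈ F e := by
    obtain ⟨y, ⟨-, w, rfl⟩, z, hz, hyz⟩ := Submodule.mem_sup.mp (hact e e.2 _ (hℓ e).mem)
    exact ⟨w, by rwa [← hyz, add_sub_cancel_left]⟩
  choose w hw using hcorr
  obtain ⟨t, ht⟩ :=
    Submodule.exists_linearMap_apply_eq_of_isFreeGeneratorMod hF0 hFs hmono hℓ (-w)
  have hgen (e : Fin s) : (γ.toLinearMap + d ∘ₗ t) (ℓ e) - ξ e • ℓ e ∈ F e := by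
    simpa [ht, sub_eq_add_neg, add_right_comm] using hw e
  have hmaps := Submodule.mapsTo_of_isFreeGeneratorMod hF0 hFs hmono hℓ hgen
  exact ⟨t, hmaps, fun e he => (hℓ ⟨e, he⟩).sub_smul_mem (hmaps e) (hgen ⟨e, he⟩)⟩

/-- Homotopy-modification step: over a DVR `A`, given an automorphism `γ` of a finite free
module `M` preserving a filtration `0 = F⁰ ⊆ ... ⊆ Fˢ = M` with rank-one free quotients,
a map `d : L → M` with image in `𝔪M`, and units `ξ_e` such that `γ` acts on each cyclic
module `F^{e+1}/((F^{e+1} ∩ im d) + F^e)` by multiplication by `ξ_e`, there is an `A`-linear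
`t : M → L` such that `γ' = γ + d ∘ t` preserves the filtration and acts on each quotient
`F^{e+1}/F^e` by multiplication by `ξ_e`. -/
theorem stmt_18 (A : Type*) [CommRing A] [IsDomain A] [IsDiscreteValuationRing A]
    (M L : Type*) [AddCommGroup M] [Module A M] [Module.Finite A M] [Module.Free A M]
    [AddCommGroup L] [Module A L] [Module.Finite A L] [Module.Free A L]
    (γ : M ≃ₗ[A] M) (s : ℕ) (F : ℕ → Submodule A M)
    (hF0 : F 0 = ⊥) (hFs : F s = ⊤) (hmono : Monotone F)
    (hstab : ∀ e, Submodule.map γ.toLinearMap (F e) = F e)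
    (hrk : ∀ e, e < s →
      Module.Free A (↥(F (e + 1)) ⧸ Submodule.comap (F (e + 1)).subtype (F e)) ∧
      Module.rank A (↥(F (e + 1)) ⧸ Submodule.comap (F (e + 1)).subtype (F e)) = 1)
    (d : L →ₗ[A] M)
    (hd : LinearMap.range d ≤ (IsLocalRing.maximalIdeal A) • (⊤ : Submodule A M))
    (ξ : ℕ → A) (hξ : ∀ e, IsUnit (ξ e))
    (hact : ∀ e, e < s → ∀ x ∈ F (e + 1),
      γ x - ξ e • x ∈ (F (e + 1) ⊓ LinearMap.range d) ⊔ F e) :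
    ∃ t : M →ₗ[A] L,
      (∀ e, ∀ x ∈ F e, (γ.toLinearMap + d ∘ₗ t) x ∈ F e) ∧
      (∀ e, e < s → ∀ x ∈ F (e + 1), (γ.toLinearMap + d ∘ₗ t) x - ξ e • x ∈ F e) :=
  stmt_18_general A M L γ s F hF0 hFs hmono hrk d ξ hact
end
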